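/- Let N \ge 2 and let w : \{1,...,N\} \to \mathbb{C} be any sequence. Then |2 \sum_{p^{\alpha}\ell \le N, \alpha \ge 1} (\log p/p^{\alpha}) (\varphi(\ell)/\ell^2) \Re(w(\ell)\overline{w(p^{\alpha}\ell)})| \le (\log N + C \log\log N) \sum_{\ell \le N} (\varphi(\ell)/\ell^2) |w(\ell)|^2 for some absolute constant C, where the outer sum is over primes p, integers \alpha \ge 1, and \ell \ge 1 with p^{\alpha}\ell \le N. -/

import Mathlib

/-!
Write `b ℓ = φ ℓ / ℓ²`. By `2 |x y| ≤ |x|² + |y|²` the bilinear sum is at most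
`∑_ℓ b ℓ |w ℓ|² ∑_{p^α ℓ ≤ N} log p / p^α + ∑_{m ≤ N} |w m|² ∑_{p^α ℓ = m} (log p / p^α) b ℓ`.

The first inner sum is at most `log N - log ℓ + 6` by Mertens' estimate
`∑_{n ≤ K} Λ n / n ≤ log K + 6`, which follows from `log K! = ∑_{n ≤ K} Λ n ⌊K / n⌋` and
Chebyshev's bound `ψ K ≤ (log 4 + 4) K`.

The second inner sum equals `b m (log m + ∑_{p ∣ m} log p / (p - 1))`: writing `m = p^α ℓ`, one has
`p^α φ ℓ = φ m` unless `p ∤ ℓ`, in which case an extra factor `p / (p - 1)` appears. Splitting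
the primes dividing `m` at `L ≈ log N`, those below `L` contribute `O(log L)` by Mertens, and the
at most `2 log m` primes above `L` contribute `O(log L / L)` each, so the extra sum is
`O(1 + |log log N|)`.

The terms `- log ℓ` and `log m` cancel, leaving `log N + O(1 + |log log N|)`, and the `O(1)` is
absorbed into `C |log log N|` because `|log log N| ≥ 1/100` for every integer `N ≥ 2`.
-/

open Finset

section

open Real
open ArithmeticFunction hiding log
open scoped Nat ComplexConjugate

theorem sum_vonMangoldt_div_le (K : ℕ) : ∑ n ∈ Icc 1 K, Λ n / n ≤ log K + 6 := by
  rcases K.eq_zero_or_pos with rfl | hK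
  · simp
  have hK' : (0 : ℝ) < K := by exact_mod_cast hK
  have hfloor : ∀ n ∈ Icc 1 K, Λ n / n * K ≤ Λ n * (K / n : ℕ) + Λ n := by
    intro n hn
    have hn : (0 : ℝ) < n := by exact_mod_cast (mem_Icc.mp hn).1
    have : (K : ℝ) / n < (K / n : ℕ) + 1 := by
      rw [← Nat.floor_div_eq_div (K := ℝ)]; exact Nat.lt_floor_add_one _
    rw [div_mul_eq_mul_div, div_le_iff₀ hn]
    rw [div_lt_iff₀ hn] at this
    nlinarith [vonMangoldt_nonneg (n := n)]
  have hlog : ∑ n ∈ Icc 1 K, Λ n * (K / n : ℕ) = ∑ n ∈ Icc 1 K, log n := by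
    have := sum_Ioc_mul_zeta_eq_sum Λ K
    rw [vonMangoldt_mul_zeta] at this
    exact this.symm
  have hlogK : ∑ n ∈ Icc 1 K, log n ≤ K * log K := by
    simpa using sum_le_card_nsmul (Icc 1 K) (fun n : ℕ ↦ log n) (log K) fun n hn ↦
      log_le_log (by exact_mod_cast (mem_Icc.mp hn).1) (by exact_mod_cast (mem_Icc.mp hn).2)
  have hpsi : ∑ n ∈ Icc 1 K, Λ n ≤ (log 4 + 4) * K := by
    have := Chebyshev.psi_le_const_mul_self hK'.le
    rwa [Chebyshev.psi, Nat.floor_natCast] at this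
  have hlog4 : log 4 < 2 := by
    rw [show (4 : ℝ) = 2 ^ 2 by norm_num, log_pow]; push_cast; linarith [log_two_lt_d9]
  have : (∑ n ∈ Icc 1 K, Λ n / n) * K ≤ (log K + 6) * K := by
    calc (∑ n ∈ Icc 1 K, Λ n / n) * K
        ≤ ∑ n ∈ Icc 1 K, (Λ n * (K / n : ℕ) + Λ n) := by rw [sum_mul]; exact sum_le_sum hfloor
      _ ≤ (log K + 6) * K := by rw [sum_add_distrib, hlog]; nlinarith
  exact le_of_mul_le_mul_right this hK'

theorem sum_primesLE_sum_pow_eq_sum_vonMangoldt (N : ℕ) (g : ℕ → ℝ) (hg : ∀ n, N < n → g n = 0) :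
    ∑ p ∈ N.primesLE, ∑ α ∈ Icc 1 N, log p * g (p ^ α) = ∑ n ∈ Icc 1 N, Λ n * g n := by
  rw [← sum_product' (f := fun p α : ℕ ↦ log p * g (p ^ α))]
  refine sum_bij_ne_zero (fun x _ _ ↦ x.1 ^ x.2) ?_ ?_ ?_ ?_
  · rintro ⟨p, α⟩ hx hne
    simp only [mem_product, Nat.mem_primesLE, mem_Icc] at hx ⊢
    refine ⟨Nat.one_le_iff_ne_zero.mpr (pow_ne_zero _ hx.1.2.ne_zero), ?_⟩
    by_contra! h
    exact hne (by simp [hg _ h])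
  · rintro ⟨p, α⟩ hx - ⟨q, β⟩ hy - h
    simp only [mem_product, Nat.mem_primesLE, mem_Icc] at hx hy
    obtain ⟨rfl, rfl⟩ := hx.1.2.pow_inj' hy.1.2 (by omega) (by omega) h
    rfl
  · intro n hn hne
    obtain ⟨p, k, hp, hk, rfl⟩ := vonMangoldt_ne_zero_iff.mp (left_ne_zero_of_mul hne)
    have hp := hp.nat_prime
    have hpk := (mem_Icc.mp hn).2
    refine ⟨(p, k), ?_, ?_, rfl⟩
    · simp only [mem_product, Nat.mem_primesLE, mem_Icc]
      exact ⟨⟨(Nat.le_self_pow hk.ne' p).trans hpk, hp⟩, hk,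
        ((Nat.lt_pow_self hp.one_lt).le).trans hpk⟩
    · rw [vonMangoldt_apply_pow hk.ne', vonMangoldt_apply_prime hp] at hne
      exact hne
  · rintro ⟨p, α⟩ hx -
    simp only [mem_product, Nat.mem_primesLE, mem_Icc] at hx
    rw [vonMangoldt_apply_pow (by omega), vonMangoldt_apply_prime hx.1.2]

theorem sum_primesLE_sum_log_div_pow_le {N ℓ : ℕ} (hℓ : ℓ ∈ Icc 1 N) :
    ∑ p ∈ N.primesLE, ∑ α ∈ Icc 1 N, (if p ^ α * ℓ ≤ N then log p / (p : ℝ) ^ α else 0) ≤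
      log N - log ℓ + 6 := by
  obtain ⟨hℓ1, hℓN⟩ := mem_Icc.mp hℓ
  have hvanish : ∀ n, N < n → (if n * ℓ ≤ N then (n : ℝ)⁻¹ else 0) = 0 := fun n hn ↦
    if_neg (by nlinarith)
  calc ∑ p ∈ N.primesLE, ∑ α ∈ Icc 1 N, (if p ^ α * ℓ ≤ N then log p / (p : ℝ) ^ α else 0)
      = ∑ n ∈ Icc 1 N, Λ n * (if n * ℓ ≤ N then (n : ℝ)⁻¹ else 0) := by
        rw [← sum_primesLE_sum_pow_eq_sum_vonMangoldt N _ hvanish]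
        refine sum_congr rfl fun p _ ↦ sum_congr rfl fun α _ ↦ ?_
        split_ifs <;> push_cast <;> ring
    _ ≤ ∑ n ∈ Icc 1 (N / ℓ), Λ n / n := by
        simp only [mul_ite, mul_zero, ← sum_filter, ← div_eq_mul_inv]
        refine sum_le_sum_of_subset_of_nonneg (fun n hn ↦ ?_) fun n _ _ ↦
          div_nonneg vonMangoldt_nonneg n.cast_nonneg
        simp only [mem_filter, mem_Icc] at hn ⊢
        exact ⟨hn.1.1, (Nat.le_div_iff_mul_le hℓ1).mpr hn.2⟩
    _ ≤ log (N / ℓ : ℕ) + 6 := sum_vonMangoldt_div_le _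
    _ ≤ log N - log ℓ + 6 := by
        have hNℓ : 0 < N / ℓ := Nat.div_pos hℓN hℓ1
        rw [← log_div (by norm_cast; omega) (by norm_cast; omega)]
        gcongr
        exact Nat.cast_div_le

theorem totient_prime_pow_succ_mul {p : ℕ} (hp : p.Prime) (k ℓ : ℕ) :
    φ (p ^ (k + 1) * ℓ) = p ^ k * φ (p * ℓ) := by
  induction k with
  | zero => simp
  | succ k ih =>
    rw [pow_succ', mul_assoc, Nat.totient_mul_of_prime_of_dvd hp (dvd_mul_of_dvd_left
      (dvd_pow_self p k.succ_ne_zero) ℓ), ih, pow_succ', mul_assoc]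

theorem prime_pow_mul_totient_eq {p α : ℕ} (hp : p.Prime) (hα : α ≠ 0) (ℓ : ℕ) :
    (p : ℝ) ^ α * φ ℓ = φ (p ^ α * ℓ) * (1 + if p ∣ ℓ then 0 else ((p : ℝ) - 1)⁻¹) := by
  obtain ⟨k, rfl⟩ : ∃ k, α = k + 1 := ⟨α - 1, by omega⟩
  have hp1 : (p : ℝ) - 1 ≠ 0 := sub_ne_zero.mpr (by exact_mod_cast hp.one_lt.ne')
  rw [totient_prime_pow_succ_mul hp]
  split_ifs with h
  · rw [Nat.totient_mul_of_prime_of_dvd hp h]; push_cast; ring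
  · rw [Nat.totient_mul_of_prime_of_not_dvd hp h, Nat.cast_mul, Nat.cast_mul,
      Nat.cast_sub hp.one_le]
    field_simp
    push_cast
    ring

theorem pow_dvd_and_not_dvd_div_iff {p m α : ℕ} (hp : p.Prime) (hm : m ≠ 0) :
    p ^ α ∣ m ∧ ¬p ∣ m / p ^ α ↔ α = m.factorization p := by
  constructor
  · rintro ⟨hdvd, hndvd⟩
    refine le_antisymm ((hp.pow_dvd_iff_le_factorization hm).mp hdvd) (not_lt.mp fun hlt ↦ ?_)
    rw [Nat.dvd_div_iff_mul_dvd hdvd, ← pow_succ, hp.pow_dvd_iff_le_factorization hm] at hndvd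
    exact hndvd hlt
  · rintro rfl
    exact ⟨Nat.ordProj_dvd m p, Nat.not_dvd_ordCompl hp hm⟩

theorem sum_primesLE_sum_exact_pow_eq {N m : ℕ} (hm : m ∈ Icc 1 N) (f : ℕ → ℝ) :
    ∑ p ∈ N.primesLE, ∑ α ∈ Icc 1 N, (if p ^ α ∣ m ∧ ¬p ∣ m / p ^ α then f p else 0) =
      ∑ p ∈ m.primeFactors, f p := by
  obtain ⟨hm1, hmN⟩ := mem_Icc.mp hm
  have hm0 : m ≠ 0 := by omega
  have hinner : ∀ p ∈ N.primesLE, ∑ α ∈ Icc 1 N,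
      (if p ^ α ∣ m ∧ ¬p ∣ m / p ^ α then f p else 0) = if p ∣ m then f p else 0 := by
    intro p hp
    have hp := (Nat.mem_primesLE.mp hp).2
    simp_rw [pow_dvd_and_not_dvd_div_iff hp hm0, sum_ite_eq', mem_Icc]
    refine if_congr ?_ rfl rfl
    rw [hp.dvd_iff_one_le_factorization hm0]
    have := Nat.factorization_lt p hm0
    omega
  rw [sum_congr rfl hinner, ← sum_filter]
  refine sum_congr ?_ fun _ _ ↦ rfl
  ext p
  simp only [mem_filter, Nat.mem_primesLE, Nat.mem_primeFactors]
  constructor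
  · rintro ⟨⟨-, hp⟩, hpm⟩; exact ⟨hp, hpm, hm0⟩
  · rintro ⟨hp, hpm, -⟩; exact ⟨⟨(Nat.le_of_dvd (by omega) hpm).trans hmN, hp⟩, hpm⟩

theorem sum_primesLE_sum_log_of_pow_dvd_eq {N m : ℕ} (hm : m ∈ Icc 1 N) :
    ∑ p ∈ N.primesLE, ∑ α ∈ Icc 1 N, (if p ^ α ∣ m then log p else 0) = log m := by
  obtain ⟨hm1, hmN⟩ := mem_Icc.mp hm
  have hvanish : ∀ n, N < n → (if n ∣ m then (1 : ℝ) else 0) = 0 := fun n hn ↦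
    if_neg fun h ↦ by linarith [Nat.le_of_dvd (by omega) h]
  have := sum_primesLE_sum_pow_eq_sum_vonMangoldt N _ hvanish
  simp only [mul_ite, mul_one, mul_zero] at this
  rw [this, ← sum_filter, ← vonMangoldt_sum]
  refine sum_congr ?_ fun _ _ ↦ rfl
  ext n
  simp only [mem_filter, mem_Icc, Nat.mem_divisors]
  constructor
  · rintro ⟨-, h⟩; exact ⟨h, by omega⟩
  · rintro ⟨h, -⟩
    exact ⟨⟨Nat.pos_of_dvd_of_pos h (by omega), (Nat.le_of_dvd (by omega) h).trans hmN⟩, h⟩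

theorem sum_primesLE_sum_pow_dvd_eq {N m : ℕ} (hm : m ∈ Icc 1 N) :
    ∑ p ∈ N.primesLE, ∑ α ∈ Icc 1 N, (if p ^ α ∣ m then
        log p / (p : ℝ) ^ α * (φ (m / p ^ α) / ((m / p ^ α : ℕ) : ℝ) ^ 2) else 0) =
      φ m / (m : ℝ) ^ 2 * (log m + ∑ p ∈ m.primeFactors, log p / (p - 1)) := by
  have hm0 : m ≠ 0 := by have := (mem_Icc.mp hm).1; omega
  have hterm : ∀ p ∈ N.primesLE, ∀ α ∈ Icc 1 N, (if p ^ α ∣ m then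
      log p / (p : ℝ) ^ α * (φ (m / p ^ α) / ((m / p ^ α : ℕ) : ℝ) ^ 2) else 0) =
      φ m / (m : ℝ) ^ 2 * ((if p ^ α ∣ m then log p else 0) +
        (if p ^ α ∣ m ∧ ¬p ∣ m / p ^ α then log p / (p - 1) else 0)) := by
    intro p hp α hα
    have hp := (Nat.mem_primesLE.mp hp).2
    have hα0 : α ≠ 0 := by have := (mem_Icc.mp hα).1; omega
    by_cases hdvd : p ^ α ∣ m
    · obtain ⟨ℓ, rfl⟩ := hdvd
      have hℓ : (ℓ : ℝ) ≠ 0 := by norm_cast; exact right_ne_zero_of_mul hm0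
      have hpα : (p : ℝ) ^ α ≠ 0 := pow_ne_zero _ (by exact_mod_cast hp.ne_zero)
      have key := prime_pow_mul_totient_eq hp hα0 ℓ
      rw [Nat.mul_div_cancel_left _ (pow_pos hp.pos α)]
      simp only [dvd_mul_right, true_and, if_true]
      rw [show log p + (if ¬p ∣ ℓ then log p / (p - 1) else 0) =
          log p * (1 + if p ∣ ℓ then 0 else ((p : ℝ) - 1)⁻¹) by split_ifs <;> ring,
        show ∀ x y z : ℝ, x / ((p ^ α * ℓ : ℕ) : ℝ) ^ 2 * (y * z) =
          x * z * y / ((p ^ α * ℓ : ℕ) : ℝ) ^ 2 from fun _ _ _ ↦ by ring, ← key]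
      push_cast
      field_simp
    · simp [hdvd]
  rw [sum_congr rfl fun p hp ↦ sum_congr rfl (hterm p hp)]
  simp only [← mul_sum, sum_add_distrib, sum_primesLE_sum_log_of_pow_dvd_eq hm,
    sum_primesLE_sum_exact_pow_eq hm]

theorem log_div_sub_one_le {x : ℝ} (hx : 2 ≤ x) : log x / (x - 1) ≤ 2 * (log x / x) := by
  have hlog : 0 ≤ log x := log_nonneg (by linarith)
  rw [mul_div_assoc', div_le_div_iff₀ (by linarith) (by linarith)]
  nlinarith

theorem card_primeFactors_mul_log_two_le (m : ℕ) : #m.primeFactors * log 2 ≤ log m := by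
  rcases eq_or_ne m 0 with rfl | hm
  · simp
  have h : 2 ^ #m.primeFactors ≤ m :=
    calc 2 ^ #m.primeFactors = ∏ _p ∈ m.primeFactors, 2 := (prod_const 2).symm
      _ ≤ ∏ p ∈ m.primeFactors, p :=
        prod_le_prod' fun p hp ↦ (Nat.prime_of_mem_primeFactors hp).two_le
      _ ≤ m := Nat.le_of_dvd (Nat.pos_of_ne_zero hm) (Nat.prod_primeFactors_dvd m)
  rw [← log_pow]
  exact log_le_log (by positivity) (by exact_mod_cast h)

theorem sum_primeFactors_le_log_div_sub_one_le (m L : ℕ) :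
    ∑ p ∈ m.primeFactors with p ≤ L, log p / (p - 1) ≤ 2 * log L + 12 :=
  calc ∑ p ∈ m.primeFactors with p ≤ L, log p / (p - 1)
      ≤ ∑ p ∈ m.primeFactors with p ≤ L, 2 * (Λ p / p) := by
        refine sum_le_sum fun p hp ↦ ?_
        have hp := Nat.prime_of_mem_primeFactors (mem_filter.mp hp).1
        rw [vonMangoldt_apply_prime hp]
        exact log_div_sub_one_le (by exact_mod_cast hp.two_le)
    _ ≤ ∑ n ∈ Icc 1 L, 2 * (Λ n / n) := by
        refine sum_le_sum_of_subset_of_nonneg (fun p hp ↦ ?_) fun n _ _ ↦ by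
          have := vonMangoldt_nonneg (n := n); positivity
        have hp := mem_filter.mp hp
        exact mem_Icc.mpr ⟨(Nat.prime_of_mem_primeFactors hp.1).one_le, hp.2⟩
    _ ≤ 2 * log L + 12 := by rw [← mul_sum]; linarith [sum_vonMangoldt_div_le L]

theorem sum_primeFactors_gt_log_div_sub_one_le {m L : ℕ} (hL : 3 ≤ L) (hmL : log m ≤ L) :
    ∑ p ∈ m.primeFactors with ¬p ≤ L, log p / (p - 1) ≤ 4 * log L := by
  have hL0 : (0 : ℝ) < L := by positivity
  have hterm : ∀ p ∈ {p ∈ m.primeFactors | ¬p ≤ L}, log p / (p - 1) ≤ 2 * (log L / L) := by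
    intro p hp
    have hp := mem_filter.mp hp
    have hLp : (L : ℝ) ≤ p := by exact_mod_cast (not_le.mp hp.2).le
    have hexp : exp 1 ≤ L := by
      have : (3 : ℝ) ≤ L := by exact_mod_cast hL
      linarith [exp_one_lt_d9]
    refine (log_div_sub_one_le ?_).trans ?_
    · exact_mod_cast (Nat.prime_of_mem_primeFactors hp.1).two_le
    gcongr 2 * ?_
    exact log_div_self_antitoneOn hexp (hexp.trans hLp) hLp
  have hcard : (#m.primeFactors : ℝ) ≤ 2 * L := by
    nlinarith [card_primeFactors_mul_log_two_le m, log_two_gt_d9]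
  calc ∑ p ∈ m.primeFactors with ¬p ≤ L, log p / (p - 1)
      ≤ #m.primeFactors * (2 * (log L / L)) := by
        refine (sum_le_card_nsmul _ _ _ hterm).trans ?_
        rw [nsmul_eq_mul]
        gcongr
        exact filter_subset _ _
    _ ≤ 2 * L * (2 * (log L / L)) := by gcongr
    _ = 4 * log L := by field_simp; ring

theorem sum_primeFactors_log_div_sub_one_le {m L : ℕ} (hL : 3 ≤ L) (hmL : log m ≤ L) :
    ∑ p ∈ m.primeFactors, log p / (p - 1) ≤ 6 * log L + 12 := by
  rw [← sum_filter_add_sum_filter_not _ (· ≤ L)]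
  linarith [sum_primeFactors_le_log_div_sub_one_le m L,
    sum_primeFactors_gt_log_div_sub_one_le hL hmL]

theorem sum_Icc_mul_le_eq_sum_Icc_dvd {M : Type*} [AddCommMonoid M] {d N : ℕ} (hd : 0 < d)
    (f : ℕ → ℕ → M) :
    ∑ ℓ ∈ Icc 1 N, (if d * ℓ ≤ N then f ℓ (d * ℓ) else 0) =
      ∑ m ∈ Icc 1 N, (if d ∣ m then f (m / d) m else 0) := by
  rw [← sum_filter, ← sum_filter]
  refine sum_nbij' (d * ·) (· / d) (fun ℓ hℓ ↦ ?_) (fun m hm ↦ ?_) (fun ℓ _ ↦ ?_)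
    (fun m hm ↦ ?_) (fun ℓ _ ↦ ?_)
  · simp only [mem_filter, mem_Icc] at hℓ ⊢
    exact ⟨⟨by nlinarith, hℓ.2⟩, dvd_mul_right d ℓ⟩
  · simp only [mem_filter, mem_Icc] at hm ⊢
    obtain ⟨⟨hm1, hmN⟩, k, rfl⟩ := hm
    rw [Nat.mul_div_cancel_left k hd]
    exact ⟨⟨Nat.pos_of_mul_pos_left (a := d) (by omega),
      (Nat.le_mul_of_pos_left k hd).trans hmN⟩, hmN⟩
  · exact Nat.mul_div_cancel_left ℓ hd
  · exact Nat.mul_div_cancel' (mem_filter.mp hm).2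
  · simp only [Nat.mul_div_cancel_left ℓ hd]

theorem sum_prime_pow_mul_le_weight_left_le (N : ℕ) (v : ℕ → ℝ) (hv : ∀ ℓ, 0 ≤ v ℓ) :
    ∑ ℓ ∈ Icc 1 N, ∑ p ∈ N.primesLE, ∑ α ∈ Icc 1 N, (if p ^ α * ℓ ≤ N then
        log p / (p : ℝ) ^ α * (φ ℓ / (ℓ : ℝ) ^ 2) * v ℓ else 0) ≤
      ∑ ℓ ∈ Icc 1 N, φ ℓ / (ℓ : ℝ) ^ 2 * v ℓ * (log N - log ℓ + 6) := by
  refine sum_le_sum fun ℓ hℓ ↦ ?_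
  have hfactor : ∑ p ∈ N.primesLE, ∑ α ∈ Icc 1 N, (if p ^ α * ℓ ≤ N then
      log p / (p : ℝ) ^ α * (φ ℓ / (ℓ : ℝ) ^ 2) * v ℓ else 0) =
      φ ℓ / (ℓ : ℝ) ^ 2 * v ℓ *
        ∑ p ∈ N.primesLE, ∑ α ∈ Icc 1 N, (if p ^ α * ℓ ≤ N then log p / (p : ℝ) ^ α else 0) := by
    simp only [mul_sum, mul_ite, mul_zero]
    exact sum_congr rfl fun _ _ ↦ sum_congr rfl fun _ _ ↦ by split_ifs <;> ring
  rw [hfactor]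
  exact mul_le_mul_of_nonneg_left (sum_primesLE_sum_log_div_pow_le hℓ) (by have := hv ℓ; positivity)

theorem sum_prime_pow_mul_le_weight_right_eq (N : ℕ) (v : ℕ → ℝ) :
    ∑ ℓ ∈ Icc 1 N, ∑ p ∈ N.primesLE, ∑ α ∈ Icc 1 N, (if p ^ α * ℓ ≤ N then
        log p / (p : ℝ) ^ α * (φ ℓ / (ℓ : ℝ) ^ 2) * v (p ^ α * ℓ) else 0) =
      ∑ m ∈ Icc 1 N, φ m / (m : ℝ) ^ 2 * v m *
        (log m + ∑ p ∈ m.primeFactors, log p / (p - 1)) := by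
  calc _ = ∑ p ∈ N.primesLE, ∑ α ∈ Icc 1 N, ∑ ℓ ∈ Icc 1 N, (if p ^ α * ℓ ≤ N then
        log p / (p : ℝ) ^ α * (φ ℓ / (ℓ : ℝ) ^ 2) * v (p ^ α * ℓ) else 0) := by
        rw [sum_comm]; exact sum_congr rfl fun _ _ ↦ sum_comm
    _ = ∑ p ∈ N.primesLE, ∑ α ∈ Icc 1 N, ∑ m ∈ Icc 1 N, (if p ^ α ∣ m then
        log p / (p : ℝ) ^ α * (φ (m / p ^ α) / ((m / p ^ α : ℕ) : ℝ) ^ 2) * v m else 0) := by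
        refine sum_congr rfl fun p hp ↦ sum_congr rfl fun α _ ↦ ?_
        exact sum_Icc_mul_le_eq_sum_Icc_dvd (pow_pos (Nat.mem_primesLE.mp hp).2.pos α)
          fun ℓ m ↦ log p / (p : ℝ) ^ α * (φ ℓ / (ℓ : ℝ) ^ 2) * v m
    _ = ∑ p ∈ N.primesLE, ∑ m ∈ Icc 1 N, ∑ α ∈ Icc 1 N, (if p ^ α ∣ m then
        log p / (p : ℝ) ^ α * (φ (m / p ^ α) / ((m / p ^ α : ℕ) : ℝ) ^ 2) * v m else 0) :=
        sum_congr rfl fun _ _ ↦ sum_comm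
    _ = ∑ m ∈ Icc 1 N, ∑ p ∈ N.primesLE, ∑ α ∈ Icc 1 N, (if p ^ α ∣ m then
        log p / (p : ℝ) ^ α * (φ (m / p ^ α) / ((m / p ^ α : ℕ) : ℝ) ^ 2) * v m else 0) :=
        sum_comm
    _ = _ := by
        refine sum_congr rfl fun m hm ↦ ?_
        rw [mul_right_comm, ← sum_primesLE_sum_pow_dvd_eq hm]
        simp only [sum_mul, ite_zero_mul]

theorem sum_prime_pow_mul_le_weight_add_le (N : ℕ) (v : ℕ → ℝ) (hv : ∀ n, 0 ≤ v n) :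
    ∑ ℓ ∈ Icc 1 N, ∑ p ∈ N.primesLE, ∑ α ∈ Icc 1 N, (if p ^ α * ℓ ≤ N then
        log p / (p : ℝ) ^ α * (φ ℓ / (ℓ : ℝ) ^ 2) * v ℓ else 0) +
      ∑ ℓ ∈ Icc 1 N, ∑ p ∈ N.primesLE, ∑ α ∈ Icc 1 N, (if p ^ α * ℓ ≤ N then
        log p / (p : ℝ) ^ α * (φ ℓ / (ℓ : ℝ) ^ 2) * v (p ^ α * ℓ) else 0) ≤
      (log N + 18 + 6 * log (⌈log N⌉₊ + 3 : ℕ)) * ∑ m ∈ Icc 1 N, φ m / (m : ℝ) ^ 2 * v m := by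
  have hR : ∀ m ∈ Icc 1 N,
      ∑ p ∈ m.primeFactors, log p / (p - 1) ≤ 6 * log (⌈log N⌉₊ + 3 : ℕ) + 12 := by
    intro m hm
    refine sum_primeFactors_log_div_sub_one_le (by omega) ?_
    calc log m ≤ log N := log_le_log (by exact_mod_cast (mem_Icc.mp hm).1)
          (by exact_mod_cast (mem_Icc.mp hm).2)
      _ ≤ ⌈log N⌉₊ := Nat.le_ceil _
      _ ≤ (⌈log N⌉₊ + 3 : ℕ) := by push_cast; linarith
  rw [sum_prime_pow_mul_le_weight_right_eq, mul_sum]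
  refine (add_le_add_left (sum_prime_pow_mul_le_weight_left_le N v hv) _).trans ?_
  rw [← sum_add_distrib]
  refine sum_le_sum fun m hm ↦ ?_
  rw [← mul_add, mul_comm]
  exact mul_le_mul_of_nonneg_right (by linarith [hR m hm]) (by have := hv m; positivity)

theorem abs_two_mul_sum_re_mul_conj_le {ι : Type*} (s : Finset ι) (c : ι → ℝ)
    (hc : ∀ i ∈ s, 0 ≤ c i) (z z' : ι → ℂ) :
    |2 * ∑ i ∈ s, c i * (z i * conj (z' i)).re| ≤
      ∑ i ∈ s, c i * ‖z i‖ ^ 2 + ∑ i ∈ s, c i * ‖z' i‖ ^ 2 := by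
  rw [mul_sum, ← sum_add_distrib]
  refine (abs_sum_le_sum_abs _ _).trans (sum_le_sum fun i hi ↦ ?_)
  have hre : |(z i * conj (z' i)).re| ≤ ‖z i‖ * ‖z' i‖ := by
    simpa using Complex.abs_re_le_norm (z i * conj (z' i))
  rw [abs_mul, abs_mul, abs_two, abs_of_nonneg (hc i hi)]
  nlinarith [two_mul_le_add_sq ‖z i‖ ‖z' i‖, abs_nonneg (z i * conj (z' i)).re, hc i hi]

theorem log_add_four_le {x : ℝ} (hx : 0 ≤ x) : log (x + 4) ≤ 2 + |log x| := by
  have hlog5 : log 5 ≤ 2 := by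
    rw [log_le_iff_le_exp (by norm_num), show (2 : ℝ) = 1 + 1 by norm_num, exp_add]
    nlinarith [exp_one_gt_d9]
  rcases le_or_gt x 1 with hx1 | hx1
  · linarith [log_le_log (by linarith) (show x + 4 ≤ 5 by linarith), abs_nonneg (log x)]
  · calc log (x + 4) ≤ log (5 * x) := log_le_log (by linarith) (by linarith)
      _ = log 5 + log x := log_mul (by norm_num) (by linarith)
      _ ≤ 2 + |log x| := add_le_add hlog5 (le_abs_self _)

theorem one_div_hundred_le_abs_log_log {N : ℕ} (hN : 2 ≤ N) : 1 / 100 ≤ |log (log N)| := by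
  have hlog2 := log_two_lt_d9
  have hlog2' := log_two_gt_d9
  rcases hN.eq_or_lt with rfl | hN
  · have : log (log 2) ≤ log 2 - 1 := log_le_sub_one_of_pos (by linarith)
    rw [abs_of_neg (by push_cast; linarith)]
    push_cast
    linarith
  · have hlog3 : 1.02 ≤ log 3 := by
      have := one_sub_inv_le_log_of_pos (show (0 : ℝ) < 3 / 2 by norm_num)
      rw [show (3 : ℝ) = 2 * (3 / 2) by norm_num, log_mul (by norm_num) (by norm_num)]
      norm_num at this ⊢
      linarith
    have hlogN : 1.02 ≤ log N :=
      hlog3.trans (log_le_log (by norm_num) (by exact_mod_cast hN))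
    have := one_sub_inv_le_log_of_pos (show 0 < log N by linarith)
    have hinv : (log N)⁻¹ ≤ 1.02⁻¹ := inv_anti₀ (by norm_num) hlogN
    refine le_trans ?_ (le_abs_self _)
    norm_num at hinv ⊢
    linarith

end

/-- the bilinear prime-power sum is bounded by
`(log N + O(log log N))` times the diagonal quadratic form. -/
theorem S1_bound :
    ∃ C : ℝ, 0 < C ∧ ∀ N : ℕ, 2 ≤ N → ∀ w : ℕ → ℂ,
      |2 * ∑ ℓ ∈ Finset.Icc 1 N, ∑ p ∈ (Finset.range (N + 1)).filter Nat.Prime,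
          ∑ α ∈ Finset.Icc 1 N,
            (if p ^ α * ℓ ≤ N then
              Real.log p / (p : ℝ) ^ α * ((Nat.totient ℓ : ℝ) / (ℓ : ℝ) ^ 2) *
                (w ℓ * (starRingEnd ℂ) (w (p ^ α * ℓ))).re
            else 0)| ≤
        (Real.log N + C * |Real.log (Real.log N)|) *
          ∑ ℓ ∈ Finset.Icc 1 N, (Nat.totient ℓ : ℝ) / (ℓ : ℝ) ^ 2 * ‖w ℓ‖ ^ 2 := by
  refine ⟨3006, by norm_num, fun N hN w ↦ ?_⟩
  have hA : 1 / 100 ≤ |Real.log (Real.log N)| := one_div_hundred_le_abs_log_log hN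
  have hlogN : 0 ≤ Real.log N := Real.log_natCast_nonneg N
  have hL : Real.log (⌈Real.log N⌉₊ + 3 : ℕ) ≤ 2 + |Real.log (Real.log N)| := by
    refine (Real.log_le_log (by positivity) ?_).trans (log_add_four_le hlogN)
    have := Nat.ceil_lt_add_one hlogN
    push_cast
    linarith
  have hCS := abs_two_mul_sum_re_mul_conj_le (Icc 1 N ×ˢ N.primesLE ×ˢ Icc 1 N)
    (fun x ↦ if x.2.1 ^ x.2.2 * x.1 ≤ N then
      Real.log x.2.1 / (x.2.1 : ℝ) ^ x.2.2 * (Nat.totient x.1 / (x.1 : ℝ) ^ 2) else 0)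
    (fun x _ ↦ by split_ifs <;> positivity)
    (fun x ↦ w x.1) (fun x ↦ w (x.2.1 ^ x.2.2 * x.1))
  simp only [sum_product, ite_zero_mul] at hCS
  rw [← Nat.primesLE_eq_filter_range]
  refine hCS.trans <| (sum_prime_pow_mul_le_weight_add_le N _ fun _ ↦ by positivity).trans ?_
  -- `18 + 6 (2 + |log log N|) ≤ 3006 |log log N|` since `|log log N| ≥ 1/100`
  exact mul_le_mul_of_nonneg_right (by linarith) (sum_nonneg fun _ _ ↦ by positivity)
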